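/- Under the same assumptions on c and with c̃ defined as before, let μ(n) = Z⁻¹ ∏_{k=1}^n c(k)⁻¹ and μ̃(n) = Z̃⁻¹ ∏_{k=1}^n c̃(k)⁻¹ be the associated normalized zero-range single-site measures on ℕ (assuming both are normalizable). Then there exists C ∈ [1, ∞) such that C⁻¹ ≤ μ̃(n)/μ(n) ≤ C for all n ∈ ℕ. -/

import Mathlib

/-!
The ratio `μ̃(n)/μ(n)` equals `(Z/Z̃) ∏_{k ≤ n} c(k)/c̃(k)`, so it suffices to bound the tail
products `∏ (1 + x_k)`, `x_k = (c̃(k) - c(k))/c(k)`, from above and away from zero. By (H.1) `c`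
grows linearly. The second differences making up `c̃ - c` telescope, so by (H.2) the partial sums
of `c̃ - c` are bounded; as `1/c` has summable variation, Abel summation bounds the partial sums of
`x_k`, while `x_k = O(1/k)` makes `∑ x_k²` finite. Since `y - 2y² ≤ log (1 + y) ≤ y` for
`y ≥ -1/2`, these two bounds control the product.
-/

open Finset Filter

theorem abs_sum_range_mul_le_of_bounded_variation (f g : ℕ → ℝ) {F V M : ℝ}
    (hf : ∀ i, |f i| ≤ F) (hV : ∀ n, ∑ i ∈ range n, |f (i + 1) - f i| ≤ V)
    (hg : ∀ n, |∑ i ∈ range n, g i| ≤ M) (n : ℕ) :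
    |∑ i ∈ range n, f i * g i| ≤ (F + V) * M := by
  have hM : 0 ≤ M := (abs_nonneg _).trans (hg 0)
  have hvar : |∑ i ∈ range (n - 1), (f (i + 1) - f i) * ∑ j ∈ range (i + 1), g j| ≤ V * M :=
    calc _ ≤ ∑ i ∈ range (n - 1), |f (i + 1) - f i| * M := by
          refine (abs_sum_le_sum_abs _ _).trans (sum_le_sum fun i _ => ?_)
          rw [abs_mul]
          exact mul_le_mul_of_nonneg_left (hg _) (abs_nonneg _)
      _ ≤ V * M := by rw [← sum_mul]; exact mul_le_mul_of_nonneg_right (hV _) hM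
  have hlast : |f (n - 1) * ∑ i ∈ range n, g i| ≤ F * M := by
    rw [abs_mul]; exact mul_le_mul (hf _) (hg n) (abs_nonneg _) ((abs_nonneg _).trans (hf 0))
  have hparts := sum_range_by_parts f g n
  simp only [smul_eq_mul] at hparts
  rw [hparts, add_mul]
  exact (abs_sub _ _).trans (add_le_add hlast hvar)

theorem Real.exp_sub_two_mul_sq_le_one_add {y : ℝ} (hy : -(1 / 2) ≤ y) :
    Real.exp (y - 2 * y ^ 2) ≤ 1 + y := by
  have hpos : 0 < 1 + y := by linarith
  have hlog : y - 2 * y ^ 2 ≤ Real.log (1 + y) := by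
    refine le_trans ?_ (Real.one_sub_inv_le_log_of_pos hpos)
    rw [← sub_nonneg]
    have hdiff : 1 - (1 + y)⁻¹ - (y - 2 * y ^ 2) = y ^ 2 * (1 + 2 * y) / (1 + y) := by
      field_simp
      ring
    have : 0 ≤ 1 + 2 * y := by linarith
    rw [hdiff]
    positivity
  calc Real.exp (y - 2 * y ^ 2) ≤ Real.exp (Real.log (1 + y)) := Real.exp_le_exp.2 hlog
    _ = 1 + y := Real.exp_log hpos

theorem prod_range_one_add_mem_Icc {y : ℕ → ℝ} {K : ℝ} (hy : ∀ i, -(1 / 2) ≤ y i)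
    (hK : ∀ n, |∑ i ∈ range n, y i| ≤ K) (hsq : Summable fun i => y i ^ 2) (n : ℕ) :
    ∏ i ∈ range n, (1 + y i) ∈ Set.Icc (Real.exp (-(K + 2 * ∑' i, y i ^ 2))) (Real.exp K) := by
  have hsum := abs_le.1 (hK n)
  constructor
  · have hsq_le : ∑ i ∈ range n, y i ^ 2 ≤ ∑' i, y i ^ 2 :=
      hsq.sum_le_tsum _ fun i _ => sq_nonneg (y i)
    calc Real.exp (-(K + 2 * ∑' i, y i ^ 2))
        ≤ Real.exp (∑ i ∈ range n, (y i - 2 * y i ^ 2)) := by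
          rw [Real.exp_le_exp, sum_sub_distrib, ← mul_sum]; linarith
      _ ≤ ∏ i ∈ range n, (1 + y i) := by
          rw [Real.exp_sum]
          exact prod_le_prod (fun i _ => (Real.exp_pos _).le)
            fun i _ => Real.exp_sub_two_mul_sq_le_one_add (hy i)
  · calc ∏ i ∈ range n, (1 + y i) ≤ ∏ i ∈ range n, Real.exp (y i) :=
          prod_le_prod (fun i _ => by linarith [hy i]) fun i _ => by
            linarith [Real.add_one_le_exp (y i)]
      _ ≤ Real.exp K := by rw [← Real.exp_sum, Real.exp_le_exp]; exact hsum.2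

theorem abs_sum_range_sub_shift_le (h : ℕ → ℝ) {B : ℝ} (hB : ∀ i, |h i| ≤ B) (j N : ℕ) :
    |∑ i ∈ range N, (h (i + j) - h i)| ≤ 2 * j * B := by
  have hshift : ∑ i ∈ range N, (h (i + j) - h i) = ∑ i ∈ range j, (h (N + i) - h i) := by
    have h₁ := sum_range_add h N j
    have h₂ := sum_range_add h j N
    rw [add_comm j N] at h₂
    simp only [sum_sub_distrib, add_comm _ j]
    linarith
  rw [hshift]
  calc _ ≤ ∑ i ∈ range j, 2 * B := (abs_sum_le_sum_abs _ _).trans <| sum_le_sum fun i _ => by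
        linarith [abs_sub (h (N + i)) (h i), hB (N + i), hB i]
    _ = 2 * j * B := by rw [sum_const, card_range, nsmul_eq_mul]; ring

theorem abs_add_sub_le_mul {c : ℕ → ℝ} {Cl : ℝ} (H2 : ∀ n, |c (n + 1) - c n| ≤ Cl)
    (m j : ℕ) : |c (m + j) - c m| ≤ j * Cl := by
  induction j with
  | zero => simp
  | succ j ih =>
    calc |c (m + (j + 1)) - c m| ≤ |c (m + j + 1) - c (m + j)| + |c (m + j) - c m| := by
          rw [← add_assoc]; exact abs_sub_le _ _ _
      _ ≤ (j + 1 : ℕ) * Cl := by push_cast; linarith [H2 (m + j)]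

theorem eq_mul_prod_range_of_succ {r q : ℕ → ℝ} (h : ∀ m, r (m + 1) = r m * q (m + 1))
    (b n : ℕ) : r (b + n) = r b * ∏ i ∈ range n, q (b + 1 + i) := by
  induction n with
  | zero => simp
  | succ n ih => rw [← add_assoc, h, ih, prod_range_succ, mul_assoc, add_right_comm]

theorem exists_one_le_inv_le_and_le_of_forall_ge {r : ℕ → ℝ} (hr : ∀ n, 0 < r n) {N : ℕ}
    {L U : ℝ} (hL : 0 < L) (h : ∀ n, N ≤ n → L ≤ r n ∧ r n ≤ U) :
    ∃ C, 1 ≤ C ∧ ∀ n, C⁻¹ ≤ r n ∧ r n ≤ C := by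
  have hU : 0 ≤ U := hL.le.trans ((h N le_rfl).1.trans (h N le_rfl).2)
  set S := ∑ k ∈ range N, (r k + (r k)⁻¹)
  have hS : 0 ≤ S := sum_nonneg fun k _ => (add_pos (hr k) (inv_pos.2 (hr k))).le
  have hbound : ∀ n, r n + (r n)⁻¹ ≤ U + L⁻¹ + S := by
    intro n
    rcases lt_or_ge n N with hn | hn
    · have := single_le_sum (fun k _ => (add_pos (hr k) (inv_pos.2 (hr k))).le)
        (mem_range.2 hn)
      linarith [inv_pos.2 hL]
    · linarith [(h n hn).2, inv_anti₀ hL (h n hn).1]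
  refine ⟨1 + U + L⁻¹ + S, by linarith [inv_pos.2 hL], fun n => ⟨?_, ?_⟩⟩
  · rw [inv_le_comm₀ (by linarith [inv_pos.2 hL]) (hr n)]
    linarith [hbound n, hr n]
  · linarith [hbound n, inv_pos.2 (hr n)]

theorem exists_one_le_inv_le_and_le_of_eventually_prod {r p : ℕ → ℝ} (hr : ∀ n, 0 < r n)
    (hrp : ∀ m, r (m + 1) = r m * (p (m + 1))⁻¹)
    (hp : ∀ᶠ b in atTop, ∃ L U, 0 < L ∧ ∀ n, ∏ i ∈ range n, p (b + i) ∈ Set.Icc L U) :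
    ∃ C, 1 ≤ C ∧ ∀ n, C⁻¹ ≤ r n ∧ r n ≤ C := by
  obtain ⟨b, ⟨L, U, hL, hLU⟩, hb⟩ := (hp.and (eventually_ge_atTop 1)).exists
  obtain ⟨m, rfl⟩ : ∃ m, b = m + 1 := ⟨b - 1, by omega⟩
  have hU : 0 < U := hL.trans_le ((hLU 0).1.trans (hLU 0).2)
  refine exists_one_le_inv_le_and_le_of_forall_ge hr (N := m) (U := r m * L⁻¹)
    (mul_pos (hr m) (inv_pos.2 hU)) fun n hn => ?_
  obtain ⟨n, rfl⟩ := Nat.exists_eq_add_of_le hn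
  obtain ⟨hP₁, hP₂⟩ := hLU n
  rw [eq_mul_prod_range_of_succ (q := fun k => (p k)⁻¹) hrp, prod_inv_distrib]
  exact ⟨mul_le_mul_of_nonneg_left (inv_anti₀ (hL.trans_le hP₁) hP₂) (hr m).le,
    mul_le_mul_of_nonneg_left (inv_anti₀ hL hP₁) (hr m).le⟩

theorem summable_one_div_add_one_sq : Summable fun k : ℕ => 1 / ((k : ℝ) + 1) ^ 2 := by
  simpa using (summable_nat_add_iff 1).2 (Real.summable_one_div_nat_pow.2 one_lt_two)

theorem sum_Icc_add_one_sub (m : ℕ) : ∑ j ∈ Icc 1 m, ((m : ℝ) + 1 - j) = m * (m + 1) / 2 := by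
  induction m with
  | zero => simp
  | succ m ih =>
    rw [sum_Icc_succ_top (by omega)]
    have : ∑ j ∈ Icc 1 m, (((m + 1 : ℕ) : ℝ) + 1 - j) = ∑ j ∈ Icc 1 m, (((m : ℝ) + 1 - j) + 1) := by
      push_cast; exact sum_congr rfl fun j _ => by ring
    rw [this, sum_add_distrib, ih, sum_const, Nat.card_Icc, nsmul_eq_mul]
    push_cast; ring

noncomputable def averagedRate (c : ℕ → ℝ) (n₀ k : ℕ) : ℝ :=
  c k + (1 / (n₀ : ℝ)) * ∑ j ∈ Icc 1 (n₀ - 1),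
    (((n₀ : ℝ) - j) / n₀) * (c (k + j) + c (k - j) - 2 * c k)

section
variable {c : ℕ → ℝ} {δ Cl : ℝ} {n₀ : ℕ}

theorem abs_sum_range_second_diff_le (H2 : ∀ n, |c (n + 1) - c n| ≤ Cl) {b j : ℕ} (hj : j ≤ b)
    (N : ℕ) :
    |∑ i ∈ range N, (c (b + i + j) + c (b + i - j) - 2 * c (b + i))| ≤ 2 * j ^ 2 * Cl := by
  set h : ℕ → ℝ := fun i => c (b + i) - c (b + i - j)
  have hh : ∀ i, |h i| ≤ j * Cl := fun i => by
    simpa [h, Nat.sub_add_cancel (by omega : j ≤ b + i)] using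
      abs_add_sub_le_mul H2 (b + i - j) j
  have hD : ∀ i, c (b + i + j) + c (b + i - j) - 2 * c (b + i) = h (i + j) - h i := fun i => by
    simp only [h, ← add_assoc, Nat.add_sub_cancel]; ring
  simp only [hD]
  linarith [abs_sum_range_sub_shift_le h hh j N]

theorem abs_sum_range_averagedRate_sub_le (H2 : ∀ n, |c (n + 1) - c n| ≤ Cl) (hn₀ : 1 ≤ n₀)
    {b : ℕ} (hb : n₀ ≤ b) (N : ℕ) :
    |∑ i ∈ range N, (averagedRate c n₀ (b + i) - c (b + i))| ≤ 2 * n₀ ^ 2 * Cl := by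
  have hCl : 0 ≤ Cl := (abs_nonneg _).trans (H2 0)
  have hn : (0 : ℝ) < n₀ := by exact_mod_cast hn₀
  have hswap : ∑ i ∈ range N, (averagedRate c n₀ (b + i) - c (b + i)) =
      1 / n₀ * ∑ j ∈ Icc 1 (n₀ - 1), ((n₀ : ℝ) - j) / n₀ *
        ∑ i ∈ range N, (c (b + i + j) + c (b + i - j) - 2 * c (b + i)) := by
    simp only [averagedRate, add_sub_cancel_left, mul_sum]
    exact sum_comm
  have hterm : ∀ j ∈ Icc 1 (n₀ - 1), |((n₀ : ℝ) - j) / n₀ *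
      ∑ i ∈ range N, (c (b + i + j) + c (b + i - j) - 2 * c (b + i))| ≤ 2 * n₀ ^ 2 * Cl := by
    intro j hj
    rw [mem_Icc] at hj
    have hj₁ : (1 : ℝ) ≤ j := by exact_mod_cast hj.1
    have hj₂ : (j : ℝ) ≤ n₀ := by exact_mod_cast (by omega : j ≤ n₀)
    have hw : |((n₀ : ℝ) - j) / n₀| ≤ 1 := by
      rw [abs_div, abs_of_pos hn, div_le_one hn, abs_le]; constructor <;> linarith
    rw [abs_mul]
    calc _ ≤ 1 * (2 * j ^ 2 * Cl) :=
          mul_le_mul hw (abs_sum_range_second_diff_le H2 (by omega) N) (abs_nonneg _) zero_le_one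
      _ ≤ 2 * n₀ ^ 2 * Cl := by rw [one_mul]; gcongr
  rw [hswap, abs_mul, abs_of_pos (by positivity)]
  calc _ ≤ 1 / (n₀ : ℝ) * ∑ j ∈ Icc 1 (n₀ - 1), 2 * (n₀ : ℝ) ^ 2 * Cl := by
        gcongr; exact (abs_sum_le_sum_abs _ _).trans (sum_le_sum hterm)
    _ ≤ 1 / (n₀ : ℝ) * (n₀ * (2 * n₀ ^ 2 * Cl)) := by
        rw [sum_const, Nat.card_Icc, nsmul_eq_mul]
        gcongr
        exact_mod_cast (by omega : n₀ - 1 + 1 - 1 ≤ n₀)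
    _ = 2 * n₀ ^ 2 * Cl := by field_simp

theorem div_le_averagedRate (hc : ∀ k, 0 ≤ c k) (hn₀ : 1 ≤ n₀) (k : ℕ) :
    c k / n₀ ≤ averagedRate c n₀ k := by
  have hweights : ∑ j ∈ Icc 1 (n₀ - 1), ((n₀ : ℝ) - j) / n₀ = ((n₀ : ℝ) - 1) / 2 := by
    obtain ⟨m, rfl⟩ : ∃ m, n₀ = m + 1 := ⟨n₀ - 1, by omega⟩
    rw [← sum_div, Nat.add_sub_cancel]
    push_cast
    rw [sum_Icc_add_one_sub]
    field_simp
    ring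
  have hlow : ∑ j ∈ Icc 1 (n₀ - 1), ((n₀ : ℝ) - j) / n₀ * (-2 * c k) ≤
      ∑ j ∈ Icc 1 (n₀ - 1), ((n₀ : ℝ) - j) / n₀ * (c (k + j) + c (k - j) - 2 * c k) := by
    refine sum_le_sum fun j hj => mul_le_mul_of_nonneg_left ?_ ?_
    · linarith [hc (k + j), hc (k - j)]
    · have : (j : ℝ) ≤ n₀ := by exact_mod_cast (by rw [mem_Icc] at hj; omega : j ≤ n₀)
      exact div_nonneg (by linarith) (Nat.cast_nonneg _)
  rw [← sum_mul, hweights] at hlow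
  have hn : (n₀ : ℝ) ≠ 0 := by positivity
  have hck : c k / n₀ = c k + 1 / n₀ * (((n₀ : ℝ) - 1) / 2 * (-2 * c k)) := by
    field_simp
    ring
  rw [hck, averagedRate]
  gcongr

theorem mul_le_apply_of_le_sub (hc : ∀ k, 0 ≤ c k)
    (H1 : ∀ n m : ℕ, n + n₀ ≤ m → δ ≤ c m - c n) (q : ℕ) :
    ∀ k, n₀ * q ≤ k → δ * q ≤ c k := by
  induction q with
  | zero => intro k _; simpa using hc k
  | succ q ih =>
    intro k hk
    have h₁ := H1 (k - n₀) k (by rw [Nat.mul_succ] at hk; omega)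
    have h₂ := ih (k - n₀) (by rw [Nat.mul_succ] at hk; omega)
    push_cast; linarith

theorem mul_add_one_le_of_le_sub (hc : ∀ k, 0 ≤ c k) (hδ : 0 ≤ δ) (hn₀ : 1 ≤ n₀)
    (H1 : ∀ n m : ℕ, n + n₀ ≤ m → δ ≤ c m - c n) {k : ℕ} (hk : n₀ ≤ k) :
    δ * (k + 1) ≤ 2 * n₀ * c k := by
  have hq := mul_le_apply_of_le_sub hc H1 (k / n₀) k (Nat.mul_div_le k n₀)
  have hk' : k + 1 ≤ 2 * n₀ * (k / n₀) := by
    have h₁ := Nat.lt_mul_div_succ k (by omega : 0 < n₀)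
    have h₂ : 1 ≤ k / n₀ := (Nat.one_le_div_iff (by omega)).2 hk
    nlinarith
  have hk'' : (k : ℝ) + 1 ≤ 2 * n₀ * (k / n₀ : ℕ) := by exact_mod_cast hk'
  have hn : (0 : ℝ) ≤ n₀ := Nat.cast_nonneg _
  nlinarith

theorem inv_le_div_add_one (hc : ∀ k, 0 ≤ c k) (hδ : 0 < δ) (hn₀ : 1 ≤ n₀)
    (H1 : ∀ n m : ℕ, n + n₀ ≤ m → δ ≤ c m - c n) {k : ℕ} (hk : n₀ ≤ k) :
    0 < c k ∧ (c k)⁻¹ ≤ 2 * n₀ / δ / (k + 1) := by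
  have h := mul_add_one_le_of_le_sub hc hδ.le hn₀ H1 hk
  have hn : (0 : ℝ) < n₀ := by exact_mod_cast hn₀
  have hck : 0 < c k := by
    by_contra! h'
    nlinarith [mul_pos hδ (by positivity : (0 : ℝ) < k + 1)]
  refine ⟨hck, ?_⟩
  rw [div_div, inv_le_comm₀ hck (by positivity), inv_div, div_le_iff₀ (by positivity)]
  linarith

theorem summable_abs_inv_succ_sub_inv (hc : ∀ k, 0 ≤ c k) (hδ : 0 < δ) (hn₀ : 1 ≤ n₀)
    (H1 : ∀ n m : ℕ, n + n₀ ≤ m → δ ≤ c m - c n) (H2 : ∀ n, |c (n + 1) - c n| ≤ Cl) :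
    Summable fun k => |(c (k + 1))⁻¹ - (c k)⁻¹| := by
  refine .of_norm_bounded_eventually_nat
    (summable_one_div_add_one_sq.mul_left (Cl * (2 * n₀ / δ) ^ 2)) ?_
  filter_upwards [eventually_ge_atTop n₀] with k hk
  obtain ⟨hck, hk₀⟩ := inv_le_div_add_one hc hδ hn₀ H1 hk
  obtain ⟨hck₁, hk₁⟩ := inv_le_div_add_one hc hδ hn₀ H1 (hk.trans k.le_succ)
  have hk₁' : (c (k + 1))⁻¹ ≤ 2 * n₀ / δ / (k + 1) :=
    hk₁.trans (div_le_div_of_nonneg_left (by positivity) (by positivity) (by push_cast; linarith))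
  have hCl : 0 ≤ Cl := (abs_nonneg _).trans (H2 0)
  rw [Real.norm_eq_abs, abs_abs, inv_sub_inv hck₁.ne' hck.ne', abs_div, abs_sub_comm,
    abs_of_pos (mul_pos hck₁ hck), div_eq_mul_inv, mul_inv]
  calc _ ≤ Cl * ((2 * n₀ / δ / (k + 1)) * (2 * n₀ / δ / (k + 1))) := by
        gcongr
        exact H2 k
    _ = _ := by field_simp

theorem abs_inv_mul_averagedRate_sub_le (hc : ∀ k, 0 ≤ c k) (hδ : 0 < δ) (hn₀ : 1 ≤ n₀)
    (H1 : ∀ n m : ℕ, n + n₀ ≤ m → δ ≤ c m - c n) (H2 : ∀ n, |c (n + 1) - c n| ≤ Cl)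
    {k : ℕ} (hk : n₀ ≤ k) :
    |(c k)⁻¹ * (averagedRate c n₀ k - c k)| ≤ 2 * n₀ / δ * (2 * n₀ ^ 2 * Cl) * (1 / (k + 1)) := by
  obtain ⟨hck, hinv⟩ := inv_le_div_add_one hc hδ hn₀ H1 hk
  have hd : |averagedRate c n₀ k - c k| ≤ 2 * n₀ ^ 2 * Cl := by
    simpa using abs_sum_range_averagedRate_sub_le H2 hn₀ hk 1
  rw [abs_mul, abs_of_pos (inv_pos.2 hck), mul_comm _ (1 / _), ← mul_assoc, one_div_mul_eq_div]
  exact mul_le_mul hinv hd (abs_nonneg _) (by positivity)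

theorem eventually_bounds_prod_range_averagedRate_div (hc : ∀ k, 0 ≤ c k) (hδ : 0 < δ)
    (hn₀ : 1 ≤ n₀) (H1 : ∀ n m : ℕ, n + n₀ ≤ m → δ ≤ c m - c n)
    (H2 : ∀ n, |c (n + 1) - c n| ≤ Cl) :
    ∀ᶠ b in atTop, ∃ L U, 0 < L ∧ ∀ n,
      ∏ i ∈ range n, averagedRate c n₀ (b + i) / c (b + i) ∈ Set.Icc L U := by
  set x : ℕ → ℝ := fun k => (c k)⁻¹ * (averagedRate c n₀ k - c k)
  set D : ℝ := 2 * n₀ / δ * (2 * n₀ ^ 2 * Cl)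
  have hx : ∀ᶠ k in atTop, |x k| ≤ D * (1 / (k + 1)) :=
    eventually_atTop.2 ⟨n₀, fun k hk => abs_inv_mul_averagedRate_sub_le hc hδ hn₀ H1 H2 hk⟩
  have hsmall : ∀ᶠ k in atTop, |x k| ≤ 1 / 2 := by
    have hD : Tendsto (fun k : ℕ => D * (1 / ((k : ℝ) + 1))) atTop (nhds 0) := by
      simpa using tendsto_one_div_add_atTop_nhds_zero_nat.const_mul D
    filter_upwards [hx, hD.eventually (ge_mem_nhds (by norm_num : (0 : ℝ) < 1 / 2))]
      with k hk hk' using hk.trans hk'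
  have hsq : Summable fun k => x k ^ 2 := by
    refine .of_norm_bounded_eventually_nat (summable_one_div_add_one_sq.mul_left (D ^ 2)) ?_
    filter_upwards [hx] with k hk
    rw [Real.norm_eq_abs, abs_pow, mul_one_div, ← div_pow]
    rw [mul_one_div] at hk
    exact pow_le_pow_left₀ (abs_nonneg _) hk 2
  have hvar := summable_abs_inv_succ_sub_inv hc hδ hn₀ H1 H2
  filter_upwards [eventually_forall_ge_atTop.2 hsmall, eventually_ge_atTop n₀] with b hb hbn
  have hprod : ∀ n, ∏ i ∈ range n, averagedRate c n₀ (b + i) / c (b + i) =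
      ∏ i ∈ range n, (1 + x (b + i)) := fun n => prod_congr rfl fun i _ => by
    have := (inv_le_div_add_one hc hδ hn₀ H1 (hbn.trans (b.le_add_right i))).1
    simp only [x]; rw [mul_sub, inv_mul_cancel₀ this.ne', div_eq_inv_mul]; ring
  have hsum : ∀ n, |∑ i ∈ range n, x (b + i)| ≤
      (2 * n₀ / δ + ∑' i, |(c (b + i + 1))⁻¹ - (c (b + i))⁻¹|) * (2 * n₀ ^ 2 * Cl) := by
    refine abs_sum_range_mul_le_of_bounded_variation _ _ (fun i => ?_) (fun n => ?_)
      (abs_sum_range_averagedRate_sub_le H2 hn₀ hbn)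
    · obtain ⟨hck, hinv⟩ := inv_le_div_add_one hc hδ hn₀ H1 (hbn.trans (b.le_add_right i))
      rw [abs_of_pos (inv_pos.2 hck)]
      exact hinv.trans (div_le_self (by positivity) (by linarith [(b + i).cast_nonneg (α := ℝ)]))
    · exact (hvar.comp_injective (add_right_injective b)).sum_le_tsum _ fun i _ => abs_nonneg _
  refine ⟨_, _, Real.exp_pos _, fun n => hprod n ▸ prod_range_one_add_mem_Icc
    (fun i => neg_le_of_abs_le ((hb _ (b.le_add_right i)).trans_eq (by norm_num))) hsum
    (hsq.comp_injective (add_right_injective b)) n⟩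
end

theorem div_succ_eq_mul_inv_div {c ct μ μt : ℕ → ℝ} {Z Zt : ℝ}
    (hμ : ∀ n, μ n = (∏ k ∈ Icc 1 n, (c k)⁻¹) / Z)
    (hμt : ∀ n, μt n = (∏ k ∈ Icc 1 n, (ct k)⁻¹) / Zt) (m : ℕ) :
    μt (m + 1) / μ (m + 1) = μt m / μ m * (ct (m + 1) / c (m + 1))⁻¹ := by
  rw [hμ, hμt, hμ, hμt, prod_Icc_succ_top (by omega), prod_Icc_succ_top (by omega)]
  ring

theorem averaged_measure_equivalent_general
    (c : ℕ → ℝ) (hc0 : c 0 = 0) (hcpos : ∀ k, 1 ≤ k → 0 < c k)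
    (δ : ℝ) (hδ : 0 < δ) (n₀ : ℕ) (hn₀ : 1 ≤ n₀)
    (H1 : ∀ n m : ℕ, n + n₀ ≤ m → δ ≤ c m - c n)
    (Cl : ℝ) (H2 : ∀ n : ℕ, |c (n + 1) - c n| ≤ Cl)
    (ct : ℕ → ℝ)
    (hct : ∀ k, n₀ ≤ k → ct k = c k + (1 / (n₀ : ℝ)) *
      ∑ j ∈ Finset.Icc 1 (n₀ - 1),
        (((n₀ : ℝ) - j) / n₀) * (c (k + j) + c (k - j) - 2 * c k))
    (hct' : ∀ k, k < n₀ → ct k = ct n₀ * k / n₀)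
    -- μ and μ̃ : normalized measures proportional to ∏_{k=1}^n c(k)⁻¹ resp. ∏ c̃(k)⁻¹
    (μ μt : ℕ → ℝ)
    (Z Zt : ℝ) (hZ : 0 < Z) (hZt : 0 < Zt)
    (hμ : ∀ n, μ n = (∏ k ∈ Finset.Icc 1 n, (c k)⁻¹) / Z)
    (hμt : ∀ n, μt n = (∏ k ∈ Finset.Icc 1 n, (ct k)⁻¹) / Zt) :
    ∃ C : ℝ, 1 ≤ C ∧ ∀ n : ℕ, C⁻¹ ≤ μt n / μ n ∧ μt n / μ n ≤ C := by
  have hct_eq : ∀ k, n₀ ≤ k → ct k = averagedRate c n₀ k := hct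
  have hc : ∀ k, 0 ≤ c k := fun k =>
    k.eq_zero_or_pos.elim (fun h => h ▸ hc0.ge) fun h => (hcpos k h).le
  have hct_pos : ∀ k, n₀ ≤ k → 0 < ct k := fun k hk =>
    (div_pos (hcpos k (hn₀.trans hk)) (by positivity)).trans_le
      ((div_le_averagedRate hc hn₀ k).trans_eq (hct_eq k hk).symm)
  have hct_pos' : ∀ k, 1 ≤ k → 0 < ct k := fun k hk => (lt_or_ge k n₀).elim
    (fun h => by rw [hct' k h]; have := hct_pos n₀ le_rfl; positivity) (hct_pos k)
  have hpos : ∀ n, 0 < μt n / μ n := fun n => by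
    rw [hμ, hμt]
    exact div_pos (div_pos (prod_pos fun k hk => inv_pos.2 (hct_pos' k (mem_Icc.1 hk).1)) hZt)
      (div_pos (prod_pos fun k hk => inv_pos.2 (hcpos k (mem_Icc.1 hk).1)) hZ)
  refine exists_one_le_inv_le_and_le_of_eventually_prod (p := fun k => ct k / c k) hpos
    (div_succ_eq_mul_inv_div hμ hμt) ?_
  filter_upwards [eventually_bounds_prod_range_averagedRate_div hc hδ hn₀ H1 H2,
    eventually_ge_atTop n₀] with b ⟨L, U, hL, hLU⟩ hb
  refine ⟨L, U, hL, fun n => ?_⟩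
  convert hLU n using 3 with i
  rw [hct_eq _ (hb.trans (Nat.le_add_right _ _))]

/-- the zero-range single-site measures associated to `c` and to the
averaged rate `c̃` are equivalent: the ratio `μ̃(n)/μ(n)` is bounded above and below
by universal constants. -/
theorem averaged_measure_equivalent
    (c : ℕ → ℝ) (hc0 : c 0 = 0) (hcpos : ∀ k, 1 ≤ k → 0 < c k)
    (δ : ℝ) (hδ : 0 < δ) (n₀ : ℕ) (hn₀ : 1 ≤ n₀)
    (H1 : ∀ n m : ℕ, n + n₀ ≤ m → δ ≤ c m - c n)
    (Cl : ℝ) (H2 : ∀ n : ℕ, |c (n + 1) - c n| ≤ Cl)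
    (ct : ℕ → ℝ)
    (hct : ∀ k, n₀ ≤ k → ct k = c k + (1 / (n₀ : ℝ)) *
      ∑ j ∈ Finset.Icc 1 (n₀ - 1),
        (((n₀ : ℝ) - j) / n₀) * (c (k + j) + c (k - j) - 2 * c k))
    (hct' : ∀ k, k < n₀ → ct k = ct n₀ * k / n₀)
    -- μ and μ̃ : normalized measures proportional to ∏_{k=1}^n c(k)⁻¹ resp. ∏ c̃(k)⁻¹
    (μ μt : ℕ → ℝ)
    (hμsum : Summable μ) (hμ1 : ∑' n, μ n = 1)
    (hμtsum : Summable μt) (hμt1 : ∑' n, μt n = 1)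
    (Z Zt : ℝ) (hZ : 0 < Z) (hZt : 0 < Zt)
    (hμ : ∀ n, μ n = (∏ k ∈ Finset.Icc 1 n, (c k)⁻¹) / Z)
    (hμt : ∀ n, μt n = (∏ k ∈ Finset.Icc 1 n, (ct k)⁻¹) / Zt) :
    ∃ C : ℝ, 1 ≤ C ∧ ∀ n : ℕ, C⁻¹ ≤ μt n / μ n ∧ μt n / μ n ≤ C :=
  averaged_measure_equivalent_general c hc0 hcpos δ hδ n₀ hn₀ H1 Cl H2 ct hct hct' μ μt Z Zt hZ hZt
    hμ hμt
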